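/- Let L be a Lie algebra and I, J locally nilpotent ideals of L. Then I + J is a locally nilpotent ideal of L. -/

import Mathlib

/-- A subset `T` of a Lie algebra is locally nilpotent if every finitely generated Lie
subalgebra with generators in `T` is nilpotent. -/
def LieSetLocallyNilpotent (K : Type*) {L : Type*} [Field K] [LieRing L] [LieAlgebra K L]
    (T : Set L) : Prop :=
  ∀ s : Finset L, (s : Set L) ⊆ T →
    LieRing.IsNilpotent ↥(LieSubalgebra.lieSpan K L (s : Set L))

/-! Every finite subset of `I + J` lies in the Lie span `H` of a finite set `G ⊆ I ∪ J`, so it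
suffices to show that such an `H` is nilpotent. Once `H` is finite-dimensional, `H ∩ I` and
`H ∩ J` are spanned by finitely many elements of `I`, resp. `J`, so they lie in nilpotent
subalgebras and act nilpotently on `H`, and Fitting's lemma makes `H` nilpotent.

Finite-dimensionality is proved by induction on `G`. Each term of the lower central series of `H`
is spanned by elements of `I ∪ J`, which act locally nilpotently on `L`; sweeping a vector with
them, layer by layer, shows that every `y ∈ L` lies in a finite-dimensional `H`-stable subspace `W`.
If `y` lies in `P ∈ {I, J}`, the Lie span of `W ∩ P` is nilpotent, hence finite-dimensional, and
normalised by `H`, so `H + ⟨W ∩ P⟩` is a finite-dimensional subalgebra containing `G ∪ {y}`. -/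

open LieAlgebra LieModule

namespace LieIdeal

variable {R H M : Type*} [CommRing R] [LieRing H] [LieAlgebra R H]
  [AddCommGroup M] [Module R M] [LieRingModule H M]

theorem lie_lcs_sup_le (A : LieIdeal R H) (N : LieSubmodule R H M) (i : ℕ) :
    ⁅A, A.lcs M i ⊔ N⁆ ≤ A.lcs M (i + 1) ⊔ N := by
  rw [LieSubmodule.lie_sup, lcs_succ]
  exact sup_le_sup_left (LieSubmodule.lie_le_right N A) _

/-- Fitting's lemma, in the form of an estimate on the lower central series. -/
theorem lcs_sup_le (A B : LieIdeal R H) (i j : ℕ) :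
    (A ⊔ B).lcs M (i + j) ≤ A.lcs M i ⊔ B.lcs M j := by
  induction hn : i + j generalizing i j with
  | zero => obtain ⟨rfl, rfl⟩ := Nat.add_eq_zero_iff.1 hn; simp
  | succ n ih =>
    rw [lcs_succ, LieSubmodule.sup_lie]
    refine sup_le ?_ ?_
    · cases i with
      | zero => simp
      | succ i =>
        exact (LieSubmodule.mono_lie_right A (ih i j (by omega))).trans (lie_lcs_sup_le A _ i)
    · cases j with
      | zero => simp
      | succ j =>
        refine (LieSubmodule.mono_lie_right B (ih i j (by omega))).trans ?_
        rw [sup_comm, sup_comm (A.lcs M i)]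
        exact lie_lcs_sup_le B _ j

end LieIdeal

namespace LieModule

variable {R H M : Type*} [CommRing R] [LieRing H] [LieAlgebra R H]
  [AddCommGroup M] [Module R M] [LieRingModule H M]

theorem lowerCentralSeries_eq_inf_sup_inf {A B : LieSubmodule R H M} (h : A ⊔ B = ⊤) (k : ℕ) :
    lowerCentralSeries R H M k =
      (lowerCentralSeries R H M k ⊓ A) ⊔ (lowerCentralSeries R H M k ⊓ B) := by
  refine le_antisymm ?_ (sup_le inf_le_left inf_le_left)
  induction k with
  | zero => simp [h]
  | succ k ih =>
    rw [lowerCentralSeries_succ]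
    refine (LieSubmodule.mono_lie_right ⊤ ih).trans ?_
    rw [LieSubmodule.lie_sup]
    exact sup_le_sup
      ((LieSubmodule.lie_inf ..).trans (inf_le_inf_left _ (LieSubmodule.lie_le_right A ⊤)))
      ((LieSubmodule.lie_inf ..).trans (inf_le_inf_left _ (LieSubmodule.lie_le_right B ⊤)))

end LieModule

def Module.End.IsLocallyNilpotent {R V : Type*} [CommSemiring R] [AddCommMonoid V] [Module R V]
    (f : Module.End R V) : Prop :=
  ∀ v, ∃ n : ℕ, (f ^ n) v = 0

theorem Submodule.FG.iSup_map_pow {R V : Type*} [CommSemiring R] [AddCommMonoid V] [Module R V]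
    {W : Submodule R V} (hW : W.FG) {f : Module.End R V} (hf : f.IsLocallyNilpotent) :
    (⨆ t : ℕ, W.map (f ^ t)).FG := by
  obtain ⟨F, rfl⟩ := hW
  choose n hn using hf
  suffices ⨆ t : ℕ, (span R (F : Set V)).map (f ^ t) =
      ⨆ t ∈ Finset.range (F.sup n), (span R (F : Set V)).map (f ^ t) by
    rw [this]
    exact Submodule.fg_biSup _ _ fun t _ => (Submodule.fg_span F.finite_toSet).map _
  refine le_antisymm (iSup_le fun t => ?_) (iSup₂_le fun t _ => le_iSup_of_le t le_rfl)
  by_cases ht : t < F.sup n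
  · exact le_iSup₂_of_le (f := fun t _ => (span R (F : Set V)).map (f ^ t)) t
      (Finset.mem_range.2 ht) le_rfl
  · rw [Submodule.map_span_le]
    intro v hv
    obtain ⟨m, hm⟩ := Nat.exists_eq_add_of_le ((Finset.le_sup hv).trans (not_lt.1 ht))
    rw [hm, add_comm, pow_add, Module.End.mul_apply, hn, map_zero]
    exact zero_mem _

theorem Submodule.map_iSup_map_pow_le {R V : Type*} [CommSemiring R] [AddCommMonoid V]
    [Module R V] (W : Submodule R V) (f : Module.End R V) :
    (⨆ t : ℕ, W.map (f ^ t)).map f ≤ ⨆ t : ℕ, W.map (f ^ t) := by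
  rw [Submodule.map_iSup]
  refine iSup_le fun t => ?_
  rw [← Submodule.map_comp, ← Module.End.mul_eq_comp, ← pow_succ']
  exact le_iSup (fun t : ℕ => W.map (f ^ t)) (t + 1)

namespace LieModule

variable {R H V : Type*} [CommRing R] [LieRing H] [LieAlgebra R H]
  [AddCommGroup V] [Module R V] [LieRingModule H V] [LieModule R H V]

variable (V) in
def ActsLocallyFinitely (S : Submodule R H) : Prop :=
  ∀ v : V, ∃ W : Submodule R V, v ∈ W ∧ W.FG ∧ ∀ x ∈ S, ∀ w ∈ W, ⁅x, w⁆ ∈ W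

theorem ActsLocallyFinitely.sup_span_singleton {S : Submodule R H} (hS : ActsLocallyFinitely V S)
    {u : H} (hu : (toEnd R H V u).IsLocallyNilpotent) (hnorm : ∀ x ∈ S, ⁅u, x⁆ ∈ S) :
    ActsLocallyFinitely V (S ⊔ R ∙ u) := by
  intro v
  obtain ⟨W, hvW, hW, hWS⟩ := hS v
  set f := toEnd R H V u
  set W' := ⨆ t : ℕ, W.map (f ^ t)
  have hWW' : W ≤ W' :=
    le_iSup_of_le 0 (by rw [pow_zero, Module.End.one_eq_id, Submodule.map_id])
  have huW' : W' ≤ W'.comap f := Submodule.map_le_iff_le_comap.1 (W.map_iSup_map_pow_le f)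
  -- `⁅x, f^(t+1) w⁆ = ⁅⁅x, u⁆, f^t w⁆ + ⁅u, ⁅x, f^t w⁆⁆`, and `⁅x, u⁆ ∈ S`
  have hS_pow : ∀ t, ∀ x ∈ S, ∀ w ∈ W, ⁅x, (f ^ t) w⁆ ∈ W' := by
    intro t
    induction t with
    | zero => exact fun x hx w hw => hWW' (hWS x hx w hw)
    | succ t ih =>
      intro x hx w hw
      rw [pow_succ', Module.End.mul_apply, toEnd_apply_apply, leibniz_lie]
      refine add_mem (ih _ ?_ w hw) (huW' (ih x hx w hw))
      rw [← lie_skew]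
      exact neg_mem (hnorm x hx)
  have hSW' : ∀ x ∈ S, W' ≤ W'.comap (toEnd R H V x) := fun x hx =>
    iSup_le fun t => Submodule.map_le_iff_le_comap.2 fun w hw => hS_pow t x hx w hw
  refine ⟨W', hWW' hvW, hW.iSup_map_pow hu, fun x hx w hw => ?_⟩
  obtain ⟨s, hs, _, hc, rfl⟩ := Submodule.mem_sup.1 hx
  obtain ⟨c, rfl⟩ := Submodule.mem_span_singleton.1 hc
  rw [add_lie, smul_lie]
  exact add_mem (hSW' s hs hw) (Submodule.smul_mem _ c (huW' hw))

theorem ActsLocallyFinitely.sup_span_finset {S : Submodule R H} (hS : ActsLocallyFinitely V S)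
    (F : Finset H) (hF : ∀ u ∈ F, (toEnd R H V u).IsLocallyNilpotent)
    (hFS : ∀ u ∈ F, ∀ x ∈ S ⊔ Submodule.span R F, ⁅u, x⁆ ∈ S) :
    ActsLocallyFinitely V (S ⊔ Submodule.span R F) := by
  classical
  induction F using Finset.induction with
  | empty => simpa using hS
  | insert a F _ ih =>
    have hle : S ⊔ Submodule.span R F ≤ S ⊔ Submodule.span R (insert a F : Finset H) :=
      sup_le_sup_left (Submodule.span_mono (by simp)) _
    have hSF : ActsLocallyFinitely V (S ⊔ Submodule.span R F) :=
      ih (fun u hu => hF u (by simp [hu])) fun u hu x hx => hFS u (by simp [hu]) x (hle hx)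
    rw [Finset.coe_insert, Submodule.span_insert, sup_comm (R ∙ a), ← sup_assoc]
    exact hSF.sup_span_singleton (hF a (by simp)) fun x hx =>
      le_sup_left (a := S) (hFS a (by simp) x (hle hx))

theorem actsLocallyFinitely_of_lowerCentralSeries [LieRing.IsNilpotent H]
    (h : ∀ k, ∃ F : Finset H, Submodule.span R F = (lowerCentralSeries R H H k).toSubmodule ∧
      ∀ u ∈ F, (toEnd R H V u).IsLocallyNilpotent) :
    ActsLocallyFinitely V (⊤ : Submodule R H) := by
  obtain ⟨n, hn⟩ := (isNilpotent_iff R H H).1 ‹_›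
  suffices ∀ k ≤ n, ActsLocallyFinitely V (lowerCentralSeries R H H k).toSubmodule by
    simpa using this 0 n.zero_le
  intro k hk
  induction hk using Nat.decreasingInduction with
  | self =>
    refine fun v => ⟨R ∙ v, Submodule.mem_span_singleton_self v, Submodule.fg_span_singleton v,
      fun x hx w _ => ?_⟩
    rw [hn, LieSubmodule.mem_toSubmodule, LieSubmodule.mem_bot] at hx
    simp [hx]
  | of_succ k _ ih =>
    obtain ⟨F, hFspan, hF⟩ := h k
    have hlcs : (lowerCentralSeries R H H k).toSubmodule =
        (lowerCentralSeries R H H (k + 1)).toSubmodule ⊔ Submodule.span R (F : Set H) := by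
      rw [hFspan, right_eq_sup]
      exact antitone_lowerCentralSeries R H H k.le_succ
    rw [hlcs]
    refine ih.sup_span_finset F hF fun u hu x _ => ?_
    have hu' : u ∈ (lowerCentralSeries R H H k).toSubmodule := hFspan ▸ Submodule.subset_span hu
    rw [LieSubmodule.mem_toSubmodule] at hu'
    rw [LieSubmodule.mem_toSubmodule, lowerCentralSeries_succ, ← lie_skew]
    exact neg_mem (LieSubmodule.lie_mem_lie (LieSubmodule.mem_top x) hu')

end LieModule

namespace LieSubalgebra

variable {R L : Type*} [CommRing R] [LieRing L] [LieAlgebra R L]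

theorem isNilpotent_iff_exists_lcs_eq_bot (N : LieSubalgebra R L) :
    LieRing.IsNilpotent N ↔ ∃ k, N.toLieSubmodule.lcs k = ⊥ := by
  dsimp only [LieRing.IsNilpotent]
  -- the adjoint `N`-module and `N.toLieSubmodule` agree only up to non-reducible unfolding
  erw [N.toLieSubmodule.isNilpotent_iff_exists_lcs_eq_bot]

variable (R) in
def leftNormedSpan (s : Set L) : ℕ → Submodule R L
  | 0 => Submodule.span R s
  | n + 1 =>
    Submodule.map₂ (ad R L : L →ₗ[R] Module.End R L) (Submodule.span R s) (leftNormedSpan s n)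

theorem lie_mem_leftNormedSpan_succ {s : Set L} {n : ℕ} {x y : L} (hx : x ∈ Submodule.span R s)
    (hy : y ∈ leftNormedSpan R s n) : ⁅x, y⁆ ∈ leftNormedSpan R s (n + 1) :=
  Submodule.apply_mem_map₂ (ad R L : L →ₗ[R] Module.End R L) hx hy

theorem lie_mem_leftNormedSpan {s : Set L} {i j : ℕ} {x y : L} (hx : x ∈ leftNormedSpan R s i)
    (hy : y ∈ leftNormedSpan R s j) : ⁅x, y⁆ ∈ leftNormedSpan R s (i + j + 1) := by
  induction i generalizing j x y with
  | zero => rw [zero_add]; exact lie_mem_leftNormedSpan_succ hx hy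
  | succ i ih =>
    suffices leftNormedSpan R s (i + 1) ≤ (leftNormedSpan R s (i + 1 + j + 1)).comap
        ((ad R L : L →ₗ[R] Module.End R L).flip y) from this hx
    refine Submodule.map₂_le.2 fun a ha b hb => ?_
    simp only [Submodule.mem_comap, LinearMap.flip_apply, LieHom.coe_toLinearMap, ad_apply,
      lie_lie]
    refine sub_mem ?_ ?_
    · have := lie_mem_leftNormedSpan_succ ha (ih hb hy)
      rwa [show i + j + 1 + 1 = i + 1 + j + 1 by omega] at this
    · have := ih hb (lie_mem_leftNormedSpan_succ ha hy)
      rwa [show i + (j + 1) + 1 = i + 1 + j + 1 by omega] at this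

theorem lieSpan_le_iSup_leftNormedSpan (s : Set L) :
    (lieSpan R L s).toSubmodule ≤ ⨆ n, leftNormedSpan R s n := by
  let Q : LieSubalgebra R L :=
    { toSubmodule := ⨆ n, leftNormedSpan R s n
      lie_mem' := fun {x y} hx hy => by
        have : Submodule.map₂ (ad R L : L →ₗ[R] Module.End R L) (⨆ n, leftNormedSpan R s n)
            (⨆ n, leftNormedSpan R s n) ≤ ⨆ n, leftNormedSpan R s n := by
          simp only [Submodule.map₂_iSup_left, Submodule.map₂_iSup_right]
          exact iSup₂_le fun i j => Submodule.map₂_le.2 fun a ha b hb =>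
            Submodule.mem_iSup_of_mem _ (lie_mem_leftNormedSpan ha hb)
        exact this (Submodule.apply_mem_map₂ _ hx hy) }
  exact (lieSpan_le.2 (Submodule.subset_span.trans (le_iSup (leftNormedSpan R s) 0)) :
    lieSpan R L s ≤ Q)

theorem leftNormedSpan_le_lcs (s : Set L) (n : ℕ) :
    leftNormedSpan R s n ≤ ((lieSpan R L s).toLieSubmodule.lcs n).toSubmodule := by
  induction n with
  | zero => exact submodule_span_le_lieSpan
  | succ n ih =>
    refine Submodule.map₂_le.2 fun x hx y hy => ?_
    rw [LieSubmodule.lcs_succ]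
    exact LieSubmodule.lie_mem_lie (x := ⟨x, submodule_span_le_lieSpan hx⟩)
      (LieSubmodule.mem_top _) (ih hy)

theorem fg_leftNormedSpan {s : Set L} (hs : s.Finite) (n : ℕ) : (leftNormedSpan R s n).FG := by
  induction n with
  | zero => exact Submodule.fg_span hs
  | succ n ih => exact (Submodule.fg_span hs).map₂ _ ih

theorem fg_lieSpan_of_isNilpotent {s : Set L} (hs : s.Finite)
    (hnil : LieRing.IsNilpotent (lieSpan R L s)) : (lieSpan R L s).toSubmodule.FG := by
  obtain ⟨c, hc⟩ := (isNilpotent_iff_exists_lcs_eq_bot _).1 hnil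
  have hvanish : ∀ n, c ≤ n → leftNormedSpan R s n = ⊥ := by
    intro n hn
    induction n, hn using Nat.le_induction with
    | base => simpa [hc] using leftNormedSpan_le_lcs (R := R) s c
    | succ n _ ih => exact (congrArg _ ih).trans (Submodule.map₂_bot_right _ _)
  have heq : (lieSpan R L s).toSubmodule = ⨆ n ∈ Finset.range c, leftNormedSpan R s n := by
    refine le_antisymm ((lieSpan_le_iSup_leftNormedSpan s).trans (iSup_le fun n => ?_))
      (iSup₂_le fun n _ => (leftNormedSpan_le_lcs s n).trans (LieSubmodule.lcs_le_self n _))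
    by_cases hn : n < c
    · exact le_biSup (leftNormedSpan R s) (Finset.mem_range.2 hn)
    · rw [hvanish n (not_lt.1 hn)]
      exact bot_le
  rw [heq]
  exact Submodule.fg_biSup _ _ fun n _ => fg_leftNormedSpan hs n

theorem lieSpan_span (s : Set L) : lieSpan R L (Submodule.span R s) = lieSpan R L s :=
  le_antisymm (lieSpan_le.2 submodule_span_le_lieSpan) (lieSpan_mono Submodule.subset_span)

theorem mem_normalizer_lieSpan {s : Set L} {x : L} (h : ∀ y ∈ s, ⁅x, y⁆ ∈ lieSpan R L s) :
    x ∈ (lieSpan R L s).normalizer := by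
  rw [mem_normalizer_iff]
  intro y hy
  induction hy using lieSpan_induction with
  | mem y hy => exact h y hy
  | zero => simp
  | add a b _ _ ha hb => rw [lie_add]; exact add_mem ha hb
  | smul c a _ ha => rw [lie_smul]; exact Submodule.smul_mem _ c ha
  | lie a b ha hb iha ihb => rw [leibniz_lie]; exact add_mem (lie_mem _ iha hb) (lie_mem _ ha ihb)

theorem sup_toSubmodule_of_le_normalizer {H N : LieSubalgebra R L} (h : H ≤ N.normalizer) :
    (H ⊔ N).toSubmodule = H.toSubmodule ⊔ N.toSubmodule := by
  let S : LieSubalgebra R L :=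
    { toSubmodule := H.toSubmodule ⊔ N.toSubmodule
      lie_mem' := fun {x y} hx hy => by
        obtain ⟨a, ha, b, hb, rfl⟩ := Submodule.mem_sup.1 hx
        obtain ⟨a', ha', b', hb', rfl⟩ := Submodule.mem_sup.1 hy
        have hN : ∀ {c n}, c ∈ H → n ∈ N → ⁅c, n⁆ ∈ N := fun hc hn =>
          (N.mem_normalizer_iff _).1 (h hc) _ hn
        rw [add_lie, lie_add, lie_add, ← lie_skew b a']
        exact add_mem
          (add_mem (Submodule.mem_sup_left (H.lie_mem ha ha'))
            (Submodule.mem_sup_right (hN ha hb')))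
          (add_mem (Submodule.mem_sup_right (neg_mem (hN ha' hb)))
            (Submodule.mem_sup_right (N.lie_mem hb hb'))) }
  refine le_antisymm ?_
    (sup_le (fun x hx => le_sup_left (a := H) hx) fun x hx => le_sup_right (a := H) hx)
  exact (sup_le (fun x hx => Submodule.mem_sup_left hx) fun x hx => Submodule.mem_sup_right hx :
    H ⊔ N ≤ S)

theorem comap_incl_sup_comap_incl_eq_top {s : Set L} {I J : LieIdeal R L}
    (hs : s ⊆ (I : Set L) ∪ J) :
    I.comap (lieSpan R L s).incl ⊔ J.comap (lieSpan R L s).incl = ⊤ := by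
  rw [eq_top_iff]
  rintro ⟨x, hx⟩ -
  induction hx using lieSpan_induction with
  | mem x hx =>
    rcases hs hx with h | h
    · exact le_sup_left (a := I.comap (lieSpan R L s).incl) (LieIdeal.mem_comap.2 h)
    · exact le_sup_right (a := I.comap (lieSpan R L s).incl) (LieIdeal.mem_comap.2 h)
  | zero => exact zero_mem _
  | add x y _ _ hx hy => exact add_mem hx hy
  | smul c x _ hx => exact Submodule.smul_mem _ c hx
  | lie x y hx _ _ hy => exact LieSubmodule.lie_mem (x := (⟨x, hx⟩ : lieSpan R L s)) _ hy

theorem exists_lcs_eq_bot_of_forall_mem {H : LieSubalgebra R L} (A : LieIdeal R H)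
    (N : LieSubalgebra R L) [hN : LieRing.IsNilpotent N] (hAN : ∀ a ∈ A, (a : L) ∈ N) :
    ∃ p, A.lcs H p = ⊥ := by
  obtain ⟨k, hk⟩ := (isNilpotent_iff_exists_lcs_eq_bot N).1 hN
  have key : ∀ n, ∀ x ∈ A.lcs H (n + 1), (x : L) ∈ N.toLieSubmodule.lcs n := by
    intro n
    induction n with
    | zero => exact fun x hx => hAN x (LieSubmodule.lie_le_left A ⊤ hx)
    | succ n ih =>
      intro x hx
      rw [LieIdeal.lcs_succ, ← LieSubmodule.mem_toSubmodule,
        LieSubmodule.lieIdeal_oper_eq_linear_span'] at hx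
      induction hx using Submodule.span_induction with
      | mem _ h =>
        obtain ⟨a, ha, m, hm, rfl⟩ := h
        rw [LieSubmodule.lcs_succ]
        exact LieSubmodule.lie_mem_lie (x := ⟨a, hAN a ha⟩) (LieSubmodule.mem_top _) (ih m hm)
      | zero => exact zero_mem _
      | add x y _ _ hx hy => exact add_mem hx hy
      | smul c x _ hx => exact Submodule.smul_mem _ c hx
  refine ⟨k + 1, (LieSubmodule.eq_bot_iff _).2 fun x hx => ?_⟩
  have := key k x hx
  rw [hk, LieSubmodule.mem_bot] at this
  exact Subtype.ext this

end LieSubalgebra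

namespace LieSetLocallyNilpotent

open LieSubalgebra

variable {K L : Type*} [Field K] [LieRing L] [LieAlgebra K L]

theorem isNilpotent_lieSpan_of_fg {T : Set L} (hT : LieSetLocallyNilpotent K T)
    {W : Submodule K L} (hW : W.FG) (hWT : (W : Set L) ⊆ T) :
    LieRing.IsNilpotent (lieSpan K L (W : Set L)) := by
  obtain ⟨F, rfl⟩ := hW
  rw [lieSpan_span]
  exact hT F (Submodule.subset_span.trans hWT)

theorem fg_lieSpan_of_fg {T : Set L} (hT : LieSetLocallyNilpotent K T)
    {W : Submodule K L} (hW : W.FG) (hWT : (W : Set L) ⊆ T) :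
    (lieSpan K L (W : Set L)).toSubmodule.FG := by
  have hnil := hT.isNilpotent_lieSpan_of_fg hW hWT
  obtain ⟨F, rfl⟩ := hW
  rw [lieSpan_span] at hnil ⊢
  exact fg_lieSpan_of_isNilpotent F.finite_toSet hnil

theorem isLocallyNilpotent_ad {I : LieIdeal K L} (hI : LieSetLocallyNilpotent K (I : Set L))
    {u : L} (hu : u ∈ I) : (ad K L u).IsLocallyNilpotent := by
  classical
  intro v
  set N := lieSpan K L (({u, ⁅u, v⁆} : Finset L) : Set L)
  have : LieRing.IsNilpotent N :=
    hI _ (by simpa [Set.insert_subset_iff] using ⟨hu, lie_mem_left K L I u v hu⟩)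
  obtain ⟨k, hk⟩ := nilpotent_ad_of_nilpotent_algebra K N
  have hu' : u ∈ N := subset_lieSpan (by simp)
  have hw' : ⁅u, v⁆ ∈ N := subset_lieSpan (by simp)
  refine ⟨k + 1, ?_⟩
  rw [pow_succ, Module.End.mul_apply, ad_apply, ← coe_ad_pow K L N ⟨u, hu'⟩ ⟨⁅u, v⁆, hw'⟩, hk]
  rfl

theorem exists_lcs_comap_eq_bot {P : LieIdeal K L} (hP : LieSetLocallyNilpotent K (P : Set L))
    {H : LieSubalgebra K L} (hH : H.toSubmodule.FG) : ∃ p, (P.comap H.incl).lcs H p = ⊥ := by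
  have hW : (H.toSubmodule ⊓ P.toSubmodule).FG := hH.of_le inf_le_left
  have := hP.isNilpotent_lieSpan_of_fg hW fun x hx => hx.2
  exact exists_lcs_eq_bot_of_forall_mem _ _ fun a ha =>
    subset_lieSpan (show (a : L) ∈ H.toSubmodule ⊓ P.toSubmodule from ⟨a.2, ha⟩)

variable {I J : LieIdeal K L}

theorem isNilpotent_lieSpan_of_subset_union (hI : LieSetLocallyNilpotent K (I : Set L))
    (hJ : LieSetLocallyNilpotent K (J : Set L)) {s : Set L} (hs : s ⊆ (I : Set L) ∪ J)
    (hfg : (lieSpan K L s).toSubmodule.FG) : LieRing.IsNilpotent (lieSpan K L s) := by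
  obtain ⟨p, hp⟩ := hI.exists_lcs_comap_eq_bot hfg
  obtain ⟨q, hq⟩ := hJ.exists_lcs_comap_eq_bot hfg
  refine (isNilpotent_iff K _ _).2 ⟨p + q, eq_bot_iff.2 ?_⟩
  rw [← LieIdeal.lcs_top, ← comap_incl_sup_comap_incl_eq_top hs]
  exact (LieIdeal.lcs_sup_le _ _ p q).trans (by simp [hp, hq])

theorem actsLocallyFinitely_lieSpan (hI : LieSetLocallyNilpotent K (I : Set L))
    (hJ : LieSetLocallyNilpotent K (J : Set L)) {s : Set L} (hs : s ⊆ (I : Set L) ∪ J)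
    (hfg : (lieSpan K L s).toSubmodule.FG) :
    ActsLocallyFinitely L (⊤ : Submodule K (lieSpan K L s)) := by
  classical
  have := hI.isNilpotent_lieSpan_of_subset_union hJ hs hfg
  have : IsNoetherian K (lieSpan K L s) := IsNoetherian.iff_fg.2 (Module.Finite.iff_fg.2 hfg)
  refine actsLocallyFinitely_of_lowerCentralSeries fun k => ?_
  obtain ⟨FI, hFI⟩ := IsNoetherian.noetherian
    (lowerCentralSeries K _ _ k ⊓ I.comap (lieSpan K L s).incl).toSubmodule
  obtain ⟨FJ, hFJ⟩ := IsNoetherian.noetherian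
    (lowerCentralSeries K _ _ k ⊓ J.comap (lieSpan K L s).incl).toSubmodule
  refine ⟨FI ∪ FJ, ?_, fun u hu => ?_⟩
  · rw [Finset.coe_union, Submodule.span_union, hFI, hFJ, ← LieSubmodule.sup_toSubmodule,
      ← lowerCentralSeries_eq_inf_sup_inf (comap_incl_sup_comap_incl_eq_top hs)]
  · rcases Finset.mem_union.1 hu with hu | hu
    · have h : u ∈ (lowerCentralSeries K _ _ k ⊓ I.comap (lieSpan K L s).incl).toSubmodule :=
        hFI ▸ Submodule.subset_span hu
      exact hI.isLocallyNilpotent_ad h.2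
    · have h : u ∈ (lowerCentralSeries K _ _ k ⊓ J.comap (lieSpan K L s).incl).toSubmodule :=
        hFJ ▸ Submodule.subset_span hu
      exact hJ.isLocallyNilpotent_ad h.2

theorem fg_lieSpan_insert (hI : LieSetLocallyNilpotent K (I : Set L))
    (hJ : LieSetLocallyNilpotent K (J : Set L)) {s : Set L} (hs : s ⊆ (I : Set L) ∪ J)
    (hfg : (lieSpan K L s).toSubmodule.FG) {y : L} (hy : y ∈ (I : Set L) ∪ J) :
    (lieSpan K L (insert y s)).toSubmodule.FG := by
  obtain ⟨W, hyW, hW, hWs⟩ := hI.actsLocallyFinitely_lieSpan hJ hs hfg y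
  obtain ⟨P, hP, hyP⟩ : ∃ P : LieIdeal K L, LieSetLocallyNilpotent K (P : Set L) ∧ y ∈ P :=
    hy.elim (fun h => ⟨I, hI, h⟩) fun h => ⟨J, hJ, h⟩
  set H := lieSpan K L s
  -- cutting `W` down to `P` keeps it stable under `H`, and makes its Lie span nilpotent
  set W' : Submodule K L := W ⊓ P.toSubmodule
  set N := lieSpan K L (W' : Set L)
  have hW' : W'.FG := hW.of_le inf_le_left
  have hW'P : (W' : Set L) ⊆ P := fun x hx => hx.2
  have hnorm : H ≤ N.normalizer := fun h hh => mem_normalizer_lieSpan fun w hw =>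
    subset_lieSpan (show ⁅h, w⁆ ∈ W' from ⟨hWs ⟨h, hh⟩ trivial w hw.1, P.lie_mem hw.2⟩)
  have hle : lieSpan K L (insert y s) ≤ H ⊔ N := by
    rw [lieSpan_le, Set.insert_subset_iff]
    exact ⟨le_sup_right (a := H) (subset_lieSpan (show y ∈ W' from ⟨hyW, hyP⟩)),
      subset_lieSpan.trans (le_sup_left (b := N))⟩
  have hHN : (H ⊔ N).toSubmodule.FG := by
    rw [sup_toSubmodule_of_le_normalizer hnorm]
    exact hfg.sup (hP.fg_lieSpan_of_fg hW' hW'P)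
  exact hHN.of_le hle

theorem fg_lieSpan_of_subset_union (hI : LieSetLocallyNilpotent K (I : Set L))
    (hJ : LieSetLocallyNilpotent K (J : Set L)) (G : Finset L)
    (hG : (G : Set L) ⊆ (I : Set L) ∪ J) :
    (lieSpan K L (G : Set L)).toSubmodule.FG := by
  classical
  induction G using Finset.induction with
  | empty => simp [Submodule.fg_bot]
  | insert y G _ ih =>
    rw [Finset.coe_insert] at hG ⊢
    exact fg_lieSpan_insert hI hJ ((Set.subset_insert _ _).trans hG)
      (ih ((Set.subset_insert _ _).trans hG)) (hG (Set.mem_insert _ _))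

end LieSetLocallyNilpotent

theorem sup_locallyNilpotent_lie_ideal {K L : Type*} [Field K] [LieRing L] [LieAlgebra K L]
    (I J : LieIdeal K L)
    (hI : LieSetLocallyNilpotent K (I : Set L)) (hJ : LieSetLocallyNilpotent K (J : Set L)) :
    LieSetLocallyNilpotent K ((I ⊔ J : LieIdeal K L) : Set L) := by
  intro s hs
  have hs' : (s : Set L) ⊆ Submodule.span K ((I : Set L) ∪ J) := fun x hx => by
    obtain ⟨a, ha, b, hb, rfl⟩ := (LieSubmodule.mem_sup _ _ _).1 (hs hx)
    exact add_mem (Submodule.subset_span (Or.inl ha)) (Submodule.subset_span (Or.inr hb))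
  obtain ⟨G, hG, hsG⟩ := Submodule.subset_span_finite_of_subset_span hs'
  have := hI.isNilpotent_lieSpan_of_subset_union hJ hG (hI.fg_lieSpan_of_subset_union hJ G hG)
  have hsG' : LieSubalgebra.lieSpan K L (s : Set L) ≤ LieSubalgebra.lieSpan K L (G : Set L) :=
    LieSubalgebra.lieSpan_le.2 (hsG.trans LieSubalgebra.submodule_span_le_lieSpan)
  exact (LieSubalgebra.inclusion_injective hsG').lieAlgebra_isNilpotent
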